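/- arXiv:1208.2015 — 6 statements merged into one kernel-verified Lean document; each statement's English description precedes it below -/
import Mathlib

section
/- Let n ≥ 1, Φ ∈ ℝ^{n×n}, K = ΦΦᵀ, γ > 0, and let I ⊆ {1,…,n} be nonempty with |I| = p. Write Φ_I ∈ ℝ^{p×n} for the rows of Φ indexed by I, set Ψ = Φ((1/n)ΦᵀΦ + γI)^{-1/2} ∈ ℝ^{n×n}, N_γ = Φ_Iᵀ(Φ_I Φ_Iᵀ + pγ I_p)^{-1} Φ_I and L_γ = Φ N_γ Φᵀ. Let 0 ≤ t < 1 and suppose λ_max[(1/n)ΨᵀΨ − (1/p)Ψ_Iᵀ Ψ_I] ≤ t, where Ψ_I is the submatrix of Ψ with rows indexed by I. Then 0 ⪯ K − L_γ ⪯ (nγ/(1−t)) · K(K + nγI)^{-1} ⪯ (nγ/(1−t)) · I, where A ⪯ B means B − A is positive semidefinite. -/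
/-!
Write `D = (1/n)ΦᵀΦ + γ`, `S = D^{-1/2}` and `E = Φ_IᵀΦ_I + pγ`. The push-through identity
`Aᵀ(AAᵀ + c)⁻¹ = (AᵀA + c)⁻¹Aᵀ` gives `1 - N_γ = pγ E⁻¹`, hence `K - L_γ = pγ ΦE⁻¹Φᵀ ⪰ 0`, and
also `K(K + nγ)⁻¹ = (1/n) ΨΨᵀ`. Since `SDS = 1`, the concentration hypothesis says exactly that
`M := (1/p) SES ⪰ (1 - t)`, so `M⁻¹ ⪯ (1 - t)⁻¹`. Conjugating by `Ψ = ΦS` and using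
`ΨM⁻¹Ψᵀ = p ΦE⁻¹Φᵀ` turns this into `K - L_γ ⪯ (nγ/(1-t)) K(K + nγ)⁻¹`. The last inequality
is `1 - K(K + nγ)⁻¹ = nγ (K + nγ)⁻¹ ⪰ 0`.
-/

open Matrix

/-- Largest eigenvalue of a symmetric real matrix, expressed via the Rayleigh quotient:
`λ_max(M) = sup { vᵀ M v : ‖v‖ = 1 }`. -/
noncomputable def lamMax {r : ℕ} (M : Matrix (Fin r) (Fin r) ℝ) : ℝ :=
  sSup {x : ℝ | ∃ v : Fin r → ℝ, (∑ i, v i ^ 2) = 1 ∧ x = v ⬝ᵥ M.mulVec v}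

section LamMax

variable {r : ℕ}

lemma bddAbove_rayleigh (M : Matrix (Fin r) (Fin r) ℝ) :
    BddAbove {x : ℝ | ∃ v : Fin r → ℝ, (∑ i, v i ^ 2) = 1 ∧ x = v ⬝ᵥ M.mulVec v} := by
  have himage : {x : ℝ | ∃ v : Fin r → ℝ, (∑ i, v i ^ 2) = 1 ∧ x = v ⬝ᵥ M.mulVec v} =
      (fun v => v ⬝ᵥ M *ᵥ v) '' {v | ∑ i, v i ^ 2 = 1} := by
    ext; simp [eq_comm]
  have hbounded : Bornology.IsBounded {v : Fin r → ℝ | ∑ i, v i ^ 2 = 1} := by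
    refine (Metric.isBounded_closedBall (x := 0) (r := 1)).subset fun v hv => ?_
    refine mem_closedBall_zero_iff.2 ((pi_norm_le_iff_of_nonneg zero_le_one).2 fun i => ?_)
    rw [Real.norm_eq_abs, ← sq_le_one_iff_abs_le_one, ← hv.out]
    exact Finset.single_le_sum (fun j _ => sq_nonneg (v j)) (Finset.mem_univ i)
  rw [himage]
  exact (Metric.isCompact_of_isClosed_isBounded (isClosed_eq (by fun_prop) continuous_const)
    hbounded).bddAbove_image (by fun_prop)

lemma dotProduct_mulVec_le_of_lamMax_le {M : Matrix (Fin r) (Fin r) ℝ} {t : ℝ}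
    (h : lamMax M ≤ t) (v : Fin r → ℝ) : v ⬝ᵥ M *ᵥ v ≤ t * (v ⬝ᵥ v) := by
  rcases eq_or_ne v 0 with rfl | hv
  · simp
  have hs : 0 < v ⬝ᵥ v := by simpa using dotProduct_self_star_pos_iff.mpr hv
  set u := (√(v ⬝ᵥ v))⁻¹ • v
  have hscale : (√(v ⬝ᵥ v))⁻¹ * (√(v ⬝ᵥ v))⁻¹ = (v ⬝ᵥ v)⁻¹ := by
    rw [← mul_inv, Real.mul_self_sqrt hs.le]
  have hu : ∑ i, u i ^ 2 = 1 := by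
    rw [show ∑ i, u i ^ 2 = u ⬝ᵥ u by simp only [dotProduct, sq]]
    simp only [u, smul_dotProduct, dotProduct_smul, smul_eq_mul, ← mul_assoc, hscale]
    exact inv_mul_cancel₀ hs.ne'
  have hle : u ⬝ᵥ M *ᵥ u ≤ t := (le_csSup (bddAbove_rayleigh M) ⟨u, hu, rfl⟩).trans h
  rw [show u ⬝ᵥ M *ᵥ u = (v ⬝ᵥ v)⁻¹ * (v ⬝ᵥ M *ᵥ v) by
    simp only [u, mulVec_smul, smul_dotProduct, dotProduct_smul, smul_eq_mul, ← mul_assoc,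
      hscale]] at hle
  rwa [inv_mul_le_iff₀ hs, mul_comm] at hle

lemma posSemidef_smul_one_sub_of_lamMax_le {A : Matrix (Fin r) (Fin r) ℝ} (hA : Aᵀ = A)
    {t : ℝ} (h : lamMax A ≤ t) : (t • 1 - A).PosSemidef := by
  refine posSemidef_iff_dotProduct_mulVec.mpr ⟨?_, fun v => ?_⟩
  · simp [IsHermitian, conjTranspose_eq_transpose_of_trivial, hA]
  · rw [star_trivial, sub_mulVec, dotProduct_sub, smul_mulVec, one_mulVec, dotProduct_smul,
      smul_eq_mul, sub_nonneg]
    exact dotProduct_mulVec_le_of_lamMax_le h v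

end LamMax

namespace Matrix

variable {l m q : Type*} [Fintype l] [Fintype m] [Fintype q]

lemma posSemidef_transpose_mul_self (A : Matrix l m ℝ) : (Aᵀ * A).PosSemidef := by
  simpa only [conjTranspose_eq_transpose_of_trivial] using posSemidef_conjTranspose_mul_self A

lemma PosSemidef.mul_mul_transpose_same {M : Matrix m m ℝ} (hM : M.PosSemidef)
    (A : Matrix l m ℝ) : (A * M * Aᵀ).PosSemidef := by
  simpa only [conjTranspose_eq_transpose_of_trivial] using hM.mul_mul_conjTranspose_same A

variable [DecidableEq m]

omit [Fintype m] in
lemma PosSemidef.add_smul_one_posDef {M : Matrix m m ℝ} (hM : M.PosSemidef) {c : ℝ}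
    (hc : 0 < c) : (M + c • 1).PosDef :=
  PosDef.posSemidef_add hM (PosDef.one.smul hc)

lemma PosDef.isUnit_det {M : Matrix m m ℝ} (hM : M.PosDef) : IsUnit M.det :=
  (isUnit_iff_isUnit_det M).mp hM.isUnit

lemma one_sub_mul_inv_add_smul_one {R : Type*} [CommRing R] {K : Matrix m m R} {c : R}
    (h : IsUnit (K + c • 1).det) : 1 - K * (K + c • 1)⁻¹ = c • (K + c • 1)⁻¹ := by
  have hinv := mul_nonsing_inv _ h
  rw [Matrix.add_mul, Matrix.smul_mul, Matrix.one_mul] at hinv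
  rw [sub_eq_iff_eq_add', hinv]

-- With `B = M - c • 1 ⪰ 0`: `1 - c • M⁻¹ = M⁻¹ (B * M) M⁻¹` and `B * M = B * B + c • B ⪰ 0`.
lemma posSemidef_one_sub_smul_inv {M : Matrix m m ℝ} {c : ℝ} (hc : 0 < c)
    (h : (M - c • 1).PosSemidef) : (1 - c • M⁻¹).PosSemidef := by
  set B := M - c • 1
  have hMB : M = B + c • 1 := (sub_add_cancel M _).symm
  have hMpd : M.PosDef := hMB ▸ h.add_smul_one_posDef hc
  have hM := hMpd.isUnit_det
  have hBM : (B * M).PosSemidef := by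
    rw [hMB, Matrix.mul_add, Matrix.mul_smul, Matrix.mul_one]
    refine PosSemidef.add ?_ (h.smul hc.le)
    simpa only [h.isHermitian.eq] using posSemidef_conjTranspose_mul_self B
  have hconj := hBM.conjTranspose_mul_mul_same M⁻¹
  rwa [conjTranspose_nonsing_inv, hMpd.isHermitian.eq, Matrix.mul_assoc, Matrix.mul_assoc,
    mul_nonsing_inv _ hM, Matrix.mul_one, Matrix.mul_sub, nonsing_inv_mul _ hM,
    Matrix.mul_smul, Matrix.mul_one] at hconj

lemma mul_mul_eq_one_of_mul_self_eq_inv {R : Type*} [CommRing R] {S D : Matrix m m R}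
    (hD : IsUnit D.det) (hS : S * S = D⁻¹) : S * D * S = 1 :=
  mul_eq_one_comm.mp (by rw [← Matrix.mul_assoc, hS, nonsing_inv_mul _ hD])

lemma whitening_mul_mul_eq_one {a γ : ℝ} (ha : 0 < a) (hγ : 0 < γ) {Φ : Matrix l m ℝ}
    {S : Matrix m m ℝ} (hS : S * S = ((1 / a) • (Φᵀ * Φ) + γ • 1)⁻¹) :
    S * ((1 / a) • (Φᵀ * Φ) + γ • 1) * S = 1 :=
  mul_mul_eq_one_of_mul_self_eq_inv (((posSemidef_transpose_mul_self Φ).smul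
    (one_div_pos.mpr ha).le).add_smul_one_posDef hγ).isUnit_det hS

omit [Fintype l] in
lemma whitened_mul_inv_mul_transpose {b : ℝ} (hb : b ≠ 0) (Φ : Matrix l m ℝ)
    {S E : Matrix m m ℝ} (hST : Sᵀ = S) (hS : IsUnit S.det) (hE : IsUnit E.det) :
    Φ * S * ((1 / b) • (S * E * S))⁻¹ * (Φ * S)ᵀ = b • (Φ * E⁻¹ * Φᵀ) := by
  have hinv : ((1 / b) • (S * E * S))⁻¹ = b • (S⁻¹ * E⁻¹ * S⁻¹) := by
    refine inv_eq_right_inv ?_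
    rw [Matrix.smul_mul, Matrix.mul_smul, smul_smul, one_div_mul_cancel hb, one_smul]
    simp only [Matrix.mul_assoc, mul_nonsing_inv_cancel_left _ _ hS,
      mul_nonsing_inv_cancel_left _ _ hE, mul_nonsing_inv _ hS]
  rw [hinv, transpose_mul, hST, Matrix.mul_smul, Matrix.smul_mul]
  simp only [Matrix.mul_assoc, mul_nonsing_inv_cancel_left _ _ hS,
    nonsing_inv_mul_cancel_left _ _ hS]

lemma whitened_covariance_sub {a b γ : ℝ} (hb : b ≠ 0) {Φ : Matrix l m ℝ} {A : Matrix q m ℝ}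
    {S : Matrix m m ℝ} (hST : Sᵀ = S) (hSDS : S * ((1 / a) • (Φᵀ * Φ) + γ • 1) * S = 1) :
    (1 / a) • ((Φ * S)ᵀ * (Φ * S)) - (1 / b) • ((A * S)ᵀ * (A * S)) =
      1 - (1 / b) • (S * (Aᵀ * A + (b * γ) • 1) * S) := by
  have hΦ : (1 / a) • ((Φ * S)ᵀ * (Φ * S)) = 1 - γ • (S * S) := by
    rw [← hSDS]
    simp only [transpose_mul, hST, Matrix.mul_add, Matrix.add_mul, Matrix.mul_smul,
      Matrix.smul_mul, Matrix.mul_one, Matrix.mul_assoc]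
    abel
  rw [hΦ]
  simp only [transpose_mul, hST, Matrix.mul_add, Matrix.add_mul, Matrix.mul_smul,
    Matrix.smul_mul, Matrix.mul_one, Matrix.mul_assoc, smul_add, smul_smul, one_div,
    inv_mul_cancel_left₀ hb]
  abel

variable [DecidableEq l]

lemma transpose_mul_inv_mul_transpose_add_smul_one (A : Matrix l m ℝ) {c : ℝ} (hc : 0 < c) :
    Aᵀ * (A * Aᵀ + c • 1)⁻¹ = (Aᵀ * A + c • 1)⁻¹ * Aᵀ := by
  have hX := ((posSemidef_transpose_mul_self A).add_smul_one_posDef hc).isUnit_det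
  have hY := ((posSemidef_transpose_mul_self Aᵀ).add_smul_one_posDef hc).isUnit_det
  rw [transpose_transpose] at hY
  have hcomm : (Aᵀ * A + c • 1) * Aᵀ = Aᵀ * (A * Aᵀ + c • 1) := by
    simp only [Matrix.add_mul, Matrix.mul_add, Matrix.mul_assoc, Matrix.smul_mul,
      Matrix.mul_smul, Matrix.one_mul, Matrix.mul_one]
  calc Aᵀ * (A * Aᵀ + c • 1)⁻¹
      = (Aᵀ * A + c • 1)⁻¹ * ((Aᵀ * A + c • 1) * Aᵀ) * (A * Aᵀ + c • 1)⁻¹ := by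
        rw [← Matrix.mul_assoc, nonsing_inv_mul _ hX, Matrix.one_mul]
    _ = (Aᵀ * A + c • 1)⁻¹ * Aᵀ := by
        rw [hcomm, Matrix.mul_assoc, Matrix.mul_assoc, mul_nonsing_inv _ hY, Matrix.mul_one]

lemma one_sub_transpose_mul_inv_mul (A : Matrix l m ℝ) {c : ℝ} (hc : 0 < c) :
    1 - Aᵀ * (A * Aᵀ + c • 1)⁻¹ * A = c • (Aᵀ * A + c • 1)⁻¹ := by
  have hX := ((posSemidef_transpose_mul_self A).add_smul_one_posDef hc).isUnit_det
  rw [transpose_mul_inv_mul_transpose_add_smul_one A hc, Matrix.mul_assoc, sub_eq_iff_eq_add']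
  calc 1 = (Aᵀ * A + c • 1)⁻¹ * (Aᵀ * A + c • 1) := (nonsing_inv_mul _ hX).symm
    _ = _ := by rw [Matrix.mul_add, Matrix.mul_smul, Matrix.mul_one]

lemma whitened_mul_transpose {a γ : ℝ} (ha : 0 < a) (hγ : 0 < γ) {Φ : Matrix l m ℝ}
    {S : Matrix m m ℝ} (hST : Sᵀ = S) (hS : S * S = ((1 / a) • (Φᵀ * Φ) + γ • 1)⁻¹) :
    Φ * S * (Φ * S)ᵀ = a • (Φ * Φᵀ * (Φ * Φᵀ + (a * γ) • 1)⁻¹) := by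
  have hX := ((posSemidef_transpose_mul_self Φ).add_smul_one_posDef (mul_pos ha hγ)).isUnit_det
  have hinv : ((1 / a) • (Φᵀ * Φ) + γ • 1)⁻¹ = a • (Φᵀ * Φ + (a * γ) • 1)⁻¹ := by
    refine inv_eq_right_inv ?_
    rw [Matrix.mul_smul, ← Matrix.smul_mul, smul_add, smul_smul, smul_smul,
      mul_one_div_cancel ha.ne', one_smul, mul_nonsing_inv _ hX]
  rw [transpose_mul, hST, Matrix.mul_assoc, ← Matrix.mul_assoc S, hS, hinv, Matrix.mul_assoc,
    Matrix.smul_mul, Matrix.mul_smul,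
    transpose_mul_inv_mul_transpose_add_smul_one Φ (mul_pos ha hγ)]

omit [Fintype q] in
lemma nystrom_residual_eq (Φ : Matrix q m ℝ) (A : Matrix l m ℝ) {c : ℝ} (hc : 0 < c) :
    Φ * Φᵀ - Φ * (Aᵀ * (A * Aᵀ + c • 1)⁻¹ * A) * Φᵀ = c • (Φ * (Aᵀ * A + c • 1)⁻¹ * Φᵀ) := by
  calc Φ * Φᵀ - Φ * (Aᵀ * (A * Aᵀ + c • 1)⁻¹ * A) * Φᵀ
      = Φ * (1 - Aᵀ * (A * Aᵀ + c • 1)⁻¹ * A) * Φᵀ := by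
        rw [Matrix.mul_sub, Matrix.sub_mul, Matrix.mul_one]
    _ = _ := by rw [one_sub_transpose_mul_inv_mul A hc, Matrix.mul_smul, Matrix.smul_mul]

-- `M := (1/b) S(AᵀA + bγ)S ⪰ c` gives `c M⁻¹ ⪯ 1`; conjugating by `ΦS` turns `M⁻¹` into
-- `b Φ(AᵀA + bγ)⁻¹Φᵀ` and `1` into `a ΦΦᵀ(ΦΦᵀ + aγ)⁻¹`.
lemma posSemidef_ridge_sub_residual_of_whitened_ge {a b γ c : ℝ} (ha : 0 < a) (hb : 0 < b)
    (hγ : 0 < γ) (hc : 0 < c) {Φ : Matrix l m ℝ} {A : Matrix q m ℝ} {S : Matrix m m ℝ}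
    (hST : Sᵀ = S) (hS : S * S = ((1 / a) • (Φᵀ * Φ) + γ • 1)⁻¹)
    (h : ((1 / b) • (S * (Aᵀ * A + (b * γ) • 1) * S) - c • 1).PosSemidef) :
    ((a * γ / c) • (Φ * Φᵀ * (Φ * Φᵀ + (a * γ) • 1)⁻¹)
      - (b * γ) • (Φ * (Aᵀ * A + (b * γ) • 1)⁻¹ * Φᵀ)).PosSemidef := by
  have hSDS := whitening_mul_mul_eq_one ha hγ hS
  have hSdet : IsUnit S.det := isUnit_det_of_right_inverse (by rwa [Matrix.mul_assoc] at hSDS)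
  have hE := ((posSemidef_transpose_mul_self A).add_smul_one_posDef (mul_pos hb hγ)).isUnit_det
  have key : ((a * γ / c) • (Φ * Φᵀ * (Φ * Φᵀ + (a * γ) • 1)⁻¹)
      - (b * γ) • (Φ * (Aᵀ * A + (b * γ) • 1)⁻¹ * Φᵀ)) = (γ / c) •
        (Φ * S * (1 - c • ((1 / b) • (S * (Aᵀ * A + (b * γ) • 1) * S))⁻¹) * (Φ * S)ᵀ) := by
    rw [Matrix.mul_sub, Matrix.sub_mul, Matrix.mul_one, Matrix.mul_smul, Matrix.smul_mul,
      whitened_mul_transpose ha hγ hST hS, whitened_mul_inv_mul_transpose hb.ne' Φ hST hSdet hE]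
    match_scalars <;> field_simp
  rw [key]
  exact ((posSemidef_one_sub_smul_inv hc h).mul_mul_transpose_same _).smul (by positivity)

end Matrix

theorem stmt5_general {n : ℕ} (hn : 1 ≤ n) (Φ K : Matrix (Fin n) (Fin n) ℝ)
    (hK : K = Φ * Φᵀ) (γ : ℝ) (hγ : 0 < γ)
    (I : Finset (Fin n)) (hI : I.Nonempty) (p : ℕ) (hp : I.card = p)
    (ΦI : Matrix {i // i ∈ I} (Fin n) ℝ)
    (hΦI : ΦI = Φ.submatrix (fun x : {i // i ∈ I} => (x : Fin n)) id)
    (Nγ : Matrix (Fin n) (Fin n) ℝ)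
    (hN : Nγ = ΦIᵀ * (ΦI * ΦIᵀ + ((p : ℝ) * γ) • 1)⁻¹ * ΦI)
    (Lγ : Matrix (Fin n) (Fin n) ℝ) (hLγ : Lγ = Φ * Nγ * Φᵀ)
    -- `S` is the inverse square root of `(1/n)ΦᵀΦ + γI` (the unique positive semidefinite
    -- matrix squaring to its inverse), and `Ψ = Φ S`.
    (S : Matrix (Fin n) (Fin n) ℝ) (hSpsd : S.PosSemidef)
    (hS : S * S = ((1 / (n : ℝ)) • (Φᵀ * Φ) + γ • 1)⁻¹)
    (Ψ : Matrix (Fin n) (Fin n) ℝ) (hΨ : Ψ = Φ * S)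
    (t : ℝ) (ht1 : t < 1)
    (hconc : lamMax
        ((1 / (n : ℝ)) • (Ψᵀ * Ψ) -
          (1 / (p : ℝ)) •
            ((Ψ.submatrix (fun x : {i // i ∈ I} => (x : Fin n)) id)ᵀ *
              Ψ.submatrix (fun x : {i // i ∈ I} => (x : Fin n)) id)) ≤ t) :
    (K - Lγ).PosSemidef
      ∧ (((n : ℝ) * γ / (1 - t)) • (K * (K + ((n : ℝ) * γ) • 1)⁻¹) - (K - Lγ)).PosSemidef
      ∧ (((n : ℝ) * γ / (1 - t)) • (1 : Matrix (Fin n) (Fin n) ℝ)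
          - ((n : ℝ) * γ / (1 - t)) • (K * (K + ((n : ℝ) * γ) • 1)⁻¹)).PosSemidef := by
  have hpR : (0 : ℝ) < p := by exact_mod_cast hp ▸ Finset.card_pos.mpr hI
  have hnR : (0 : ℝ) < n := by exact_mod_cast hn
  have hST : Sᵀ = S := by simpa [conjTranspose_eq_transpose_of_trivial] using hSpsd.isHermitian.eq
  have hresid : K - Lγ = ((p : ℝ) * γ) • (Φ * (ΦIᵀ * ΦI + ((p : ℝ) * γ) • 1)⁻¹ * Φᵀ) := by
    rw [hK, hLγ, hN]
    exact nystrom_residual_eq Φ ΦI (mul_pos hpR hγ)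
  have hsub : Ψ.submatrix (fun x : {i // i ∈ I} => (x : Fin n)) id = ΦI * S := by
    rw [hΨ, hΦI, submatrix_mul _ _ _ id _ Function.bijective_id, submatrix_id_id]
  rw [hsub, hΨ, whitened_covariance_sub hpR.ne' hST (whitening_mul_mul_eq_one hnR hγ hS)] at hconc
  have hM : ((1 / (p : ℝ)) • (S * (ΦIᵀ * ΦI + ((p : ℝ) * γ) • 1) * S)
      - (1 - t) • 1).PosSemidef := by
    convert posSemidef_smul_one_sub_of_lamMax_le (by simp [hST, Matrix.mul_assoc]) hconc using 1
    rw [sub_smul, one_smul]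
    abel
  have hP : (K + ((n : ℝ) * γ) • 1).PosDef := by
    rw [hK]
    simpa using (posSemidef_transpose_mul_self Φᵀ).add_smul_one_posDef (mul_pos hnR hγ)
  refine ⟨?_, ?_, ?_⟩
  · rw [hresid]
    exact ((posSemidef_transpose_mul_self ΦI).add_smul_one_posDef (mul_pos hpR hγ)).inv.posSemidef
      |>.mul_mul_transpose_same Φ |>.smul (by positivity)
  · rw [hresid, hK]
    exact posSemidef_ridge_sub_residual_of_whitened_ge hnR hpR hγ (by linarith) hST hS hM
  · rw [← smul_sub, one_sub_mul_inv_add_smul_one hP.isUnit_det, smul_smul]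
    exact hP.inv.posSemidef.smul (by positivity)

/-- if the subsampled whitened covariance is close to the full one
(`λ_max[(1/n)ΨᵀΨ − (1/p)Ψ_IᵀΨ_I] ≤ t < 1`), then the regularized Nyström approximation
`L_γ = Φ N_γ Φᵀ` satisfies `0 ⪯ K − L_γ ⪯ (nγ/(1−t)) K(K+nγI)⁻¹ ⪯ (nγ/(1−t)) I`. -/
theorem stmt5 {n : ℕ} (hn : 1 ≤ n) (Φ K : Matrix (Fin n) (Fin n) ℝ)
    (hK : K = Φ * Φᵀ) (γ : ℝ) (hγ : 0 < γ)
    (I : Finset (Fin n)) (hI : I.Nonempty) (p : ℕ) (hp : I.card = p)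
    (ΦI : Matrix {i // i ∈ I} (Fin n) ℝ)
    (hΦI : ΦI = Φ.submatrix (fun x : {i // i ∈ I} => (x : Fin n)) id)
    (Nγ : Matrix (Fin n) (Fin n) ℝ)
    (hN : Nγ = ΦIᵀ * (ΦI * ΦIᵀ + ((p : ℝ) * γ) • 1)⁻¹ * ΦI)
    (Lγ : Matrix (Fin n) (Fin n) ℝ) (hLγ : Lγ = Φ * Nγ * Φᵀ)
    -- `S` is the inverse square root of `(1/n)ΦᵀΦ + γI` (the unique positive semidefinite
    -- matrix squaring to its inverse), and `Ψ = Φ S`.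
    (S : Matrix (Fin n) (Fin n) ℝ) (hSpsd : S.PosSemidef)
    (hS : S * S = ((1 / (n : ℝ)) • (Φᵀ * Φ) + γ • 1)⁻¹)
    (Ψ : Matrix (Fin n) (Fin n) ℝ) (hΨ : Ψ = Φ * S)
    (t : ℝ) (ht0 : 0 ≤ t) (ht1 : t < 1)
    (hconc : lamMax
        ((1 / (n : ℝ)) • (Ψᵀ * Ψ) -
          (1 / (p : ℝ)) •
            ((Ψ.submatrix (fun x : {i // i ∈ I} => (x : Fin n)) id)ᵀ *
              Ψ.submatrix (fun x : {i // i ∈ I} => (x : Fin n)) id)) ≤ t) :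
    (K - Lγ).PosSemidef
      ∧ (((n : ℝ) * γ / (1 - t)) • (K * (K + ((n : ℝ) * γ) • 1)⁻¹) - (K - Lγ)).PosSemidef
      ∧ (((n : ℝ) * γ / (1 - t)) • (1 : Matrix (Fin n) (Fin n) ℝ)
          - ((n : ℝ) * γ / (1 - t)) • (K * (K + ((n : ℝ) * γ) • 1)⁻¹)).PosSemidef :=
  stmt5_general hn Φ K hK γ hγ I hI p hp ΦI hΦI Nγ hN Lγ hLγ S hSpsd hS Ψ hΨ t ht1 hconc
end

section
/- Let K ∈ ℝ^{n×n} be symmetric positive semidefinite and let 0 < γ ≤ λ. Then K(K + nγI)^{-1} ⪯ (λ/γ) · K(K + nλI)^{-1} in the Loewner order. In particular, every diagonal entry satisfies (K(K + nγI)^{-1})_{ii} ≤ (λ/γ)(K(K + nλI)^{-1})_{ii}, and hence n · max_i (K(K + nγI)^{-1})_{ii} ≤ (λ/γ) d, where d = n · max_i (K(K + nλI)^{-1})_{ii} is the maximal marginal degrees of freedom at level λ. -/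
/-!
With `A = K + a I` and `B = K + b I`, multiplying by `B A` (which commutes with `K`) gives the
exact identity `b K B⁻¹ - a K A⁻¹ = (b - a) K (B A)⁻¹ K`. For `0 < a ≤ b` the matrix `B A` is
positive semidefinite, hence so is its inverse and the congruence `K (B A)⁻¹ K`; dividing by `a`
yields `K A⁻¹ ⪯ (b / a) K B⁻¹`. Comparing diagonals and then maxima gives the rest.
-/

namespace Matrix

variable {n : Type*} [DecidableEq n]

theorem PosSemidef.posDef_add_smul_one {K : Matrix n n ℝ} (hK : K.PosSemidef) {a : ℝ}
    (ha : 0 < a) : (K + a • 1).PosDef :=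
  PosDef.posSemidef_add hK (PosDef.one.smul ha)

variable [Fintype n]

theorem commute_self_add_smul_one {R : Type*} [CommRing R] (K : Matrix n n R) (a : R) :
    Commute K (K + a • 1) :=
  (Commute.refl K).add_right ((Commute.one_right K).smul_right a)

theorem commute_add_smul_one {R : Type*} [CommRing R] (K : Matrix n n R) (a b : R) :
    Commute (K + a • 1) (K + b • 1) :=
  (commute_self_add_smul_one K b).add_left ((Commute.one_left _).smul_left a)

theorem smul_mul_inv_add_smul_one_sub {R : Type*} [CommRing R] (K : Matrix n n R) {a b : R}
    (ha : IsUnit (K + a • 1).det) (hb : IsUnit (K + b • 1).det) :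
    b • (K * (K + b • 1)⁻¹) - a • (K * (K + a • 1)⁻¹)
      = (b - a) • (K * ((K + b • 1) * (K + a • 1))⁻¹ * K) := by
  set A := K + a • 1
  set B := K + b • 1
  have hBA : IsUnit (B * A) := (isUnit_iff_isUnit_det _).2 (by rw [det_mul]; exact hb.mul ha)
  refine hBA.mul_left_inj.1 ?_
  have hKBA : Commute K (B * A) :=
    (commute_self_add_smul_one K b).mul_right (commute_self_add_smul_one K a)
  have hBcancel : K * B⁻¹ * (B * A) = K * A := by
    rw [← Matrix.mul_assoc, Matrix.mul_assoc K, nonsing_inv_mul _ hb, Matrix.mul_one]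
  have hAcancel : K * A⁻¹ * (B * A) = K * B := by
    rw [(commute_add_smul_one K b a).eq, ← Matrix.mul_assoc, Matrix.mul_assoc K,
      nonsing_inv_mul _ ha, Matrix.mul_one]
  have hKcancel : K * (B * A)⁻¹ * K * (B * A) = K * K := by
    rw [Matrix.mul_assoc _ K, hKBA.eq, ← Matrix.mul_assoc, Matrix.mul_assoc K,
      nonsing_inv_mul _ ((isUnit_iff_isUnit_det _).1 hBA), Matrix.mul_one]
  rw [sub_mul, smul_mul_assoc, smul_mul_assoc, smul_mul_assoc, hBcancel, hAcancel, hKcancel]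
  simp only [A, B, mul_add, mul_smul_comm, Matrix.mul_one, sub_smul, smul_add, smul_smul,
    mul_comm a b]
  abel

theorem PosSemidef.posSemidef_add_smul_one_mul_add_smul_one {K : Matrix n n ℝ}
    (hK : K.PosSemidef) {a b : ℝ} (ha : 0 < a) (hab : a ≤ b) :
    ((K + b • 1) * (K + a • 1)).PosSemidef := by
  have hA := (hK.posDef_add_smul_one ha).posSemidef
  have hB : K + b • 1 = (K + a • 1) + (b - a) • 1 := by
    rw [add_assoc, ← add_smul, add_sub_cancel]
  rw [hB, add_mul, smul_mul_assoc, Matrix.one_mul]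
  refine .add ?_ (hA.smul (sub_nonneg.2 hab))
  simpa only [pow_two] using hA.pow 2

theorem PosSemidef.posSemidef_div_smul_mul_inv_sub {K : Matrix n n ℝ} (hK : K.PosSemidef)
    {a b : ℝ} (ha : 0 < a) (hab : a ≤ b) :
    ((b / a) • (K * (K + b • 1)⁻¹) - K * (K + a • 1)⁻¹).PosSemidef := by
  have hunit {c : ℝ} (hc : 0 < c) : IsUnit (K + c • 1).det :=
    (hK.posDef_add_smul_one hc).det_pos.ne'.isUnit
  have hcong : (K * ((K + b • 1) * (K + a • 1))⁻¹ * K).PosSemidef := by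
    simpa only [hK.isHermitian.eq] using
      (hK.posSemidef_add_smul_one_mul_add_smul_one ha hab).inv.conjTranspose_mul_mul_same K
  have hdiff : (b / a) • (K * (K + b • 1)⁻¹) - K * (K + a • 1)⁻¹
      = a⁻¹ • (b • (K * (K + b • 1)⁻¹) - a • (K * (K + a • 1)⁻¹)) := by
    rw [smul_sub, smul_smul, smul_smul, inv_mul_cancel₀ ha.ne', one_smul, div_eq_inv_mul]
  rw [hdiff, smul_mul_inv_add_smul_one_sub K (hunit ha) (hunit (ha.trans_le hab))]
  exact (hcong.smul (sub_nonneg.2 hab)).smul (inv_nonneg.2 ha.le)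

end Matrix

theorem Real.iSup_le_mul_iSup {ι : Type*} [Finite ι] {f g : ι → ℝ} {c : ℝ} (hc : 0 ≤ c)
    (h : ∀ i, f i ≤ c * g i) : ⨆ i, f i ≤ c * ⨆ i, g i :=
  (ciSup_mono (Set.finite_range _).bddAbove h).trans_eq (Real.mul_iSup_of_nonneg hc g).symm

/-- for `K` symmetric positive semidefinite and `0 < γ ≤ λ`,
`K(K + nγI)⁻¹ ⪯ (λ/γ) K(K + nλI)⁻¹`; in particular the diagonal entries satisfy the same
inequality and `n·max_i (K(K+nγI)⁻¹)_{ii} ≤ (λ/γ) d` where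
`d = n·max_i (K(K+nλI)⁻¹)_{ii}`. -/
theorem stmt7 {n : ℕ} (hn : 1 ≤ n) (K : Matrix (Fin n) (Fin n) ℝ) (hK : K.PosSemidef)
    (γ lam : ℝ) (hγ : 0 < γ) (hγlam : γ ≤ lam)
    (d : ℝ) (hd : d = (n : ℝ) * ⨆ i, (K * (K + ((n : ℝ) * lam) • 1)⁻¹) i i) :
    ((lam / γ) • (K * (K + ((n : ℝ) * lam) • 1)⁻¹)
        - K * (K + ((n : ℝ) * γ) • 1)⁻¹).PosSemidef
      ∧ (∀ i, (K * (K + ((n : ℝ) * γ) • 1)⁻¹) i i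
          ≤ (lam / γ) * (K * (K + ((n : ℝ) * lam) • 1)⁻¹) i i)
      ∧ (n : ℝ) * (⨆ i, (K * (K + ((n : ℝ) * γ) • 1)⁻¹) i i) ≤ (lam / γ) * d := by
  have hn0 : (0 : ℝ) < n := Nat.cast_pos.2 hn
  have hloewner := hK.posSemidef_div_smul_mul_inv_sub (mul_pos hn0 hγ)
    (mul_le_mul_of_nonneg_left hγlam hn0.le)
  rw [mul_div_mul_left _ _ hn0.ne'] at hloewner
  have hdiag : ∀ i, (K * (K + ((n : ℝ) * γ) • 1)⁻¹) i i
      ≤ (lam / γ) * (K * (K + ((n : ℝ) * lam) • 1)⁻¹) i i := fun i =>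
    sub_nonneg.1 (by simpa only [Matrix.sub_apply, Matrix.smul_apply, smul_eq_mul] using
      hloewner.diag_nonneg)
  refine ⟨hloewner, hdiag, ?_⟩
  rw [hd, mul_left_comm]
  exact mul_le_mul_of_nonneg_left
    (Real.iSup_le_mul_iSup (div_nonneg (hγ.le.trans hγlam) hγ.le) hdiag) hn0.le
end

section
/- Let ρ > 0 and λ > 0. Then for every n ≥ 1, Σ_{i=1}^n e^{−2ρi}/(e^{−ρi} + λ)² ≤ (1/ρ) · log( (1 + λ)/λ ). In particular, for kernel eigenvalues with exponential decay μ_i = e^{−ρi}, the renormalized variance term Σ_{i=1}^n μ_i²/(μ_i + λ)² is O(log(1/λ)) uniformly in n. -/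
/-!
Writing `s(x) = e^{-ρx} / (e^{-ρx} + λ) ∈ [0, 1]`, the `i`-th summand is `s(i)² ≤ s(i)`.
Since `s` is decreasing, `∑_{i=1}^n s(i) ≤ ∫_0^n s`, and `-log(λ + e^{-ρx}) / ρ` is an
antiderivative of `s`, so the integral equals `(log(1 + λ) - log(λ + e^{-ρn})) / ρ`, which is at
most `log((1 + λ) / λ) / ρ`.
-/

open Real Finset

/-- The ridge shrinkage factor `μ / (μ + λ)` of the eigenvalue `μ = e^{-ρx}`. -/
noncomputable def ridgeShrinkage (ρ lam x : ℝ) : ℝ := exp (-ρ * x) / (exp (-ρ * x) + lam)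

section

variable {ρ lam : ℝ}

lemma ridgeShrinkage_nonneg (hlam : 0 ≤ lam) (x : ℝ) : 0 ≤ ridgeShrinkage ρ lam x := by
  unfold ridgeShrinkage; positivity

lemma ridgeShrinkage_le_one (hlam : 0 ≤ lam) (x : ℝ) : ridgeShrinkage ρ lam x ≤ 1 :=
  div_le_one_of_le₀ (le_add_of_nonneg_right hlam) (by positivity)

lemma exp_neg_two_mul_div_sq_eq_ridgeShrinkage_sq (ρ lam x : ℝ) :
    exp (-2 * ρ * x) / (exp (-ρ * x) + lam) ^ 2 = ridgeShrinkage ρ lam x ^ 2 := by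
  rw [ridgeShrinkage, div_pow, ← exp_nat_mul]
  ring_nf

lemma antitone_ridgeShrinkage (hρ : 0 ≤ ρ) (hlam : 0 ≤ lam) :
    Antitone (ridgeShrinkage ρ lam) := by
  intro x y hxy
  have hexp : exp (-ρ * y) ≤ exp (-ρ * x) := exp_le_exp.2 (by nlinarith)
  unfold ridgeShrinkage
  rw [div_le_div_iff₀ (by positivity) (by positivity)]
  nlinarith

lemma continuous_ridgeShrinkage (hlam : 0 ≤ lam) : Continuous (ridgeShrinkage ρ lam) :=
  Continuous.div (by fun_prop) (by fun_prop) fun x ↦ by positivity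

lemma hasDerivAt_neg_log_add_exp_div (hρ : ρ ≠ 0) (hlam : 0 ≤ lam) (x : ℝ) :
    HasDerivAt (fun x ↦ -log (lam + exp (-ρ * x)) / ρ) (ridgeShrinkage ρ lam x) x := by
  have hpos : 0 < lam + exp (-ρ * x) := by positivity
  refine ((((hasDerivAt_id x).const_mul (-ρ)).exp.const_add lam).log hpos.ne').neg.div_const ρ
    |>.congr_deriv ?_
  simp only [ridgeShrinkage, id]
  field_simp
  ring

lemma integral_ridgeShrinkage (hρ : ρ ≠ 0) (hlam : 0 ≤ lam) (b : ℝ) :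
    ∫ x in (0 : ℝ)..b, ridgeShrinkage ρ lam x
      = (log (lam + 1) - log (lam + exp (-ρ * b))) / ρ := by
  rw [intervalIntegral.integral_eq_sub_of_hasDerivAt
    (fun x _ ↦ hasDerivAt_neg_log_add_exp_div hρ hlam x)
    ((continuous_ridgeShrinkage hlam).intervalIntegrable _ _)]
  simp only [mul_zero, exp_zero]
  ring

lemma sum_ridgeShrinkage_le (hρ : 0 < ρ) (hlam : 0 < lam) (n : ℕ) :
    ∑ i ∈ Icc 1 n, ridgeShrinkage ρ lam i ≤ log ((1 + lam) / lam) / ρ := by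
  have hsum := (antitone_ridgeShrinkage hρ.le hlam.le).antitoneOn (Set.Icc ((0 : ℕ) : ℝ) n)
    |>.sum_le_integral_Ico (Nat.zero_le n)
  rw [sum_Ico_add' (fun i : ℕ ↦ ridgeShrinkage ρ lam i), zero_add, Ico_add_one_right_eq_Icc,
    Nat.cast_zero, integral_ridgeShrinkage hρ.ne' hlam.le] at hsum
  refine hsum.trans ?_
  rw [log_div (by positivity) hlam.ne', add_comm 1 lam]
  gcongr
  exact le_add_of_nonneg_right (exp_nonneg _)

end

theorem stmt11_general (ρ : ℝ) (hρ : 0 < ρ) (lam : ℝ) (hlam : 0 < lam)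
    (n : ℕ) :
    ∑ i ∈ Finset.Icc 1 n,
        Real.exp (-2 * ρ * (i : ℝ)) / (Real.exp (-ρ * (i : ℝ)) + lam) ^ 2
      ≤ (1 / ρ) * Real.log ((1 + lam) / lam) := by
  simp_rw [exp_neg_two_mul_div_sq_eq_ridgeShrinkage_sq, one_div_mul_eq_div]
  refine (sum_le_sum fun i _ ↦ ?_).trans (sum_ridgeShrinkage_le hρ hlam n)
  exact sq_le (ridgeShrinkage_nonneg hlam.le _) (ridgeShrinkage_le_one hlam.le _)

/-- for exponential eigenvalue decay `μ_i = e^{−ρi}` (`ρ > 0`), the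
renormalized variance term satisfies, uniformly in `n`,
`Σ_{i=1}^n e^{−2ρi}/(e^{−ρi} + λ)² ≤ (1/ρ) log((1 + λ)/λ)`. -/
theorem stmt11 (ρ : ℝ) (hρ : 0 < ρ) (lam : ℝ) (hlam : 0 < lam)
    (n : ℕ) (hn : 1 ≤ n) :
    ∑ i ∈ Finset.Icc 1 n,
        Real.exp (-2 * ρ * (i : ℝ)) / (Real.exp (-ρ * (i : ℝ)) + lam) ^ 2
      ≤ (1 / ρ) * Real.log ((1 + lam) / lam) :=
  stmt11_general ρ hρ lam hlam n
end

section
/- Let β > 1/2 and δ > 1/2 satisfy 2δ − 4β < 1. Then there exists a constant C (depending only on β and δ) such that for all n ≥ 1 and all λ ∈ (0, 1], λ² Σ_{i=1}^n i^{4β−2δ}/(1 + λ i^{2β})² ≤ C · λ^{(2δ−1)/(2β)}. Consequently the bias term nλ² Σ_{i=1}^n i^{4β−2δ}/(1+λi^{2β})² is O(n λ^{(2δ−1)/(2β)}) in this regime. -/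
/-!
Put `T = λ^(-1/(2β))`, the index where `λ i^(2β)` reaches `1`, and cut the sum at `m = ⌊T⌋`.
Below the cutoff each summand is at most `λ² i^(4β-2δ)` (drop `λ i^(2β)` from the denominator),
above it at most `i^(-2δ)` (drop the `1`). Comparing with `∫ t^s`, the condition `4β - 2δ > -1`
bounds the head by a multiple of `λ² m^(4β-2δ+1)`, and `2δ > 1` bounds the tail by a multiple of
`m^(1-2δ)`. Since `T/2 ≤ m ≤ T`, both are multiples of `λ^((2δ-1)/(2β))`.
-/

open Finset

theorem sum_Ioc_rpow_le {s : ℝ} (hs : s ≤ 0) (hs1 : s ≠ -1) {a b : ℕ} (ha : 0 < a) (hab : a ≤ b) :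
    ∑ i ∈ Ioc a b, (i : ℝ) ^ s ≤ ((b : ℝ) ^ (s + 1) - (a : ℝ) ^ (s + 1)) / (s + 1) := by
  have ha' : (0 : ℝ) < a := by exact_mod_cast ha
  have hanti : AntitoneOn (fun t : ℝ => t ^ s) (Set.Icc (a : ℝ) b) := fun x hx y _ hxy =>
    Real.rpow_le_rpow_of_nonpos (ha'.trans_le hx.1) hxy hs
  have hzero : (0 : ℝ) ∉ Set.uIcc (a : ℝ) b := by
    rw [Set.uIcc_of_le (by exact_mod_cast hab)]
    exact fun h => ha'.not_ge h.1
  calc ∑ i ∈ Ioc a b, (i : ℝ) ^ s = ∑ i ∈ Ico a b, ((i + 1 : ℕ) : ℝ) ^ s := by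
        rw [← Ico_add_one_add_one_eq_Ioc, ← sum_Ico_add']
    _ ≤ ∫ t in (a : ℝ)..b, t ^ s := hanti.sum_le_integral_Ico hab
    _ = _ := integral_rpow (Or.inr ⟨hs1, hzero⟩)

theorem sum_Icc_one_rpow_le {p : ℝ} (hp : -1 < p) {m : ℕ} (hm : 0 < m) :
    ∑ i ∈ Icc 1 m, (i : ℝ) ^ p ≤ (1 + 1 / (p + 1)) * (m : ℝ) ^ (p + 1) := by
  have hp1 : 0 < p + 1 := by linarith
  have hm' : (1 : ℝ) ≤ m := by exact_mod_cast hm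
  have hpow : 1 ≤ (m : ℝ) ^ (p + 1) := Real.one_le_rpow hm' hp1.le
  rcases le_or_gt 0 p with hp0 | hp0
  · calc ∑ i ∈ Icc 1 m, (i : ℝ) ^ p ≤ ∑ _i ∈ Icc 1 m, (m : ℝ) ^ p :=
          sum_le_sum fun i hi => Real.rpow_le_rpow (Nat.cast_nonneg i)
            (by exact_mod_cast (mem_Icc.1 hi).2) hp0
      _ = (m : ℝ) ^ (p + 1) := by
          rw [sum_const, Nat.card_Icc, Nat.add_sub_cancel, nsmul_eq_mul,
            Real.rpow_add_one (by positivity)]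
          ring
      _ ≤ _ := le_mul_of_one_le_left (by positivity) (by simp [hp1.le])
  · have htail := sum_Ioc_rpow_le hp0.le hp.ne' one_pos hm
    rw [← Icc_add_one_left_eq_Ioc] at htail
    calc ∑ i ∈ Icc 1 m, (i : ℝ) ^ p = 1 + ∑ i ∈ Icc (1 + 1) m, (i : ℝ) ^ p := by
          rw [Icc_add_one_left_eq_Ioc, ← Ioc_insert_left hm, sum_insert (by simp)]
          simp
      _ ≤ 1 + ((m : ℝ) ^ (p + 1) - 1) / (p + 1) := by simpa using htail
      _ ≤ _ := by
          have hinv : 0 < (p + 1)⁻¹ := by positivity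
          rw [sub_div, div_eq_mul_inv, one_div]
          linarith

theorem sum_Ioc_rpow_neg_le {q : ℝ} (hq : 1 < q) {a : ℕ} (ha : 0 < a) (b : ℕ) :
    ∑ i ∈ Ioc a b, (i : ℝ) ^ (-q) ≤ (a : ℝ) ^ (1 - q) / (q - 1) := by
  rcases le_total a b with hab | hba
  · calc ∑ i ∈ Ioc a b, (i : ℝ) ^ (-q)
          ≤ ((b : ℝ) ^ (-q + 1) - (a : ℝ) ^ (-q + 1)) / (-q + 1) :=
            sum_Ioc_rpow_le (by linarith) (by linarith) ha hab
      _ = ((a : ℝ) ^ (1 - q) - (b : ℝ) ^ (1 - q)) / (q - 1) := by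
          rw [neg_add_eq_sub, ← neg_sub q 1, div_neg, ← neg_div, neg_sub]
      _ ≤ (a : ℝ) ^ (1 - q) / (q - 1) := by
          gcongr
          exact sub_le_self _ (by positivity)
  · rw [Ioc_eq_empty_of_le hba, sum_empty]
    exact div_nonneg (by positivity) (by linarith)

theorem sum_Icc_le_sum_Icc_add_sum_Ioc {f : ℕ → ℝ} (hf : ∀ i, 0 ≤ f i) (m n : ℕ) :
    ∑ i ∈ Icc 1 n, f i ≤ ∑ i ∈ Icc 1 m, f i + ∑ i ∈ Ioc m n, f i := by
  rw [← sum_union (disjoint_left.2 fun i hi hi' => (mem_Ioc.1 hi').1.not_ge (mem_Icc.1 hi).2)]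
  refine sum_le_sum_of_subset_of_nonneg (fun i hi => ?_) fun i _ _ => hf i
  rw [mem_Icc] at hi
  rcases le_or_gt i m with him | hmi
  · exact mem_union_left _ (mem_Icc.2 ⟨hi.1, him⟩)
  · exact mem_union_right _ (mem_Ioc.2 ⟨hmi, hi.2⟩)

noncomputable def biasConstant (β δ : ℝ) : ℝ :=
  1 + 1 / (4 * β - 2 * δ + 1) + 2 ^ (2 * δ - 1) / (2 * δ - 1)

section Bias

variable {β δ lam : ℝ}

theorem bias_term_le_head {x : ℝ} (hlam : 0 ≤ lam) (hx : 0 ≤ x) :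
    x ^ (4 * β - 2 * δ) / (1 + lam * x ^ (2 * β)) ^ 2 ≤ x ^ (4 * β - 2 * δ) :=
  div_le_self (by positivity) (one_le_pow₀ (le_add_of_nonneg_right (by positivity)))

theorem bias_term_le_tail (hlam : 0 < lam) {x : ℝ} (hx : 0 < x) :
    lam ^ 2 * (x ^ (4 * β - 2 * δ) / (1 + lam * x ^ (2 * β)) ^ 2) ≤ x ^ (-(2 * δ)) := by
  have hy : 0 < lam * x ^ (2 * β) := by positivity
  calc lam ^ 2 * (x ^ (4 * β - 2 * δ) / (1 + lam * x ^ (2 * β)) ^ 2)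
      ≤ lam ^ 2 * (x ^ (4 * β - 2 * δ) / (lam * x ^ (2 * β)) ^ 2) := by
        gcongr; linarith
    _ = x ^ (4 * β - 2 * δ) / (x ^ (2 * β)) ^ 2 := by field_simp
    _ = x ^ (-(2 * δ)) := by
        rw [← Real.rpow_natCast, ← Real.rpow_mul hx.le, ← Real.rpow_sub hx]
        ring_nf

theorem bias_scale_rpow (hβ : β ≠ 0) (hlam : 0 < lam) :
    lam ^ 2 * (lam ^ (-(1 / (2 * β)))) ^ (4 * β - 2 * δ + 1) = lam ^ ((2 * δ - 1) / (2 * β)) ∧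
      (lam ^ (-(1 / (2 * β)))) ^ (1 - 2 * δ) = lam ^ ((2 * δ - 1) / (2 * β)) := by
  simp only [← Real.rpow_mul hlam.le, ← Real.rpow_natCast, ← Real.rpow_add hlam]
  constructor <;> congr 1 <;> field_simp <;> ring

theorem bias_sum_le_of_cutoff (hδ : 1 / 2 < δ) (hδβ : 2 * δ - 4 * β < 1) (hlam : 0 < lam)
    {m : ℕ} (hm : 0 < m) (n : ℕ) :
    lam ^ 2 * ∑ i ∈ Icc 1 n, (i : ℝ) ^ (4 * β - 2 * δ) / (1 + lam * (i : ℝ) ^ (2 * β)) ^ 2 ≤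
      lam ^ 2 * ((1 + 1 / (4 * β - 2 * δ + 1)) * (m : ℝ) ^ (4 * β - 2 * δ + 1))
        + (m : ℝ) ^ (1 - 2 * δ) / (2 * δ - 1) := by
  calc lam ^ 2 * ∑ i ∈ Icc 1 n, (i : ℝ) ^ (4 * β - 2 * δ) / (1 + lam * (i : ℝ) ^ (2 * β)) ^ 2
      = ∑ i ∈ Icc 1 n, lam ^ 2 * ((i : ℝ) ^ (4 * β - 2 * δ) / (1 + lam * (i : ℝ) ^ (2 * β)) ^ 2) :=
        mul_sum _ _ _
    _ ≤ ∑ i ∈ Icc 1 m, lam ^ 2 * ((i : ℝ) ^ (4 * β - 2 * δ) / (1 + lam * (i : ℝ) ^ (2 * β)) ^ 2)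
        + ∑ i ∈ Ioc m n, lam ^ 2 * ((i : ℝ) ^ (4 * β - 2 * δ) / (1 + lam * (i : ℝ) ^ (2 * β)) ^ 2) :=
        sum_Icc_le_sum_Icc_add_sum_Ioc (fun i => by positivity) m n
    _ ≤ lam ^ 2 * ∑ i ∈ Icc 1 m, (i : ℝ) ^ (4 * β - 2 * δ) + ∑ i ∈ Ioc m n, (i : ℝ) ^ (-(2 * δ)) := by
        rw [mul_sum]
        gcongr with i _ i hi
        · exact bias_term_le_head hlam.le (Nat.cast_nonneg i)
        · exact bias_term_le_tail hlam (by exact_mod_cast (hm.trans (mem_Ioc.1 hi).1))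
    _ ≤ _ := by
        gcongr
        · exact sum_Icc_one_rpow_le (by linarith) hm
        · exact sum_Ioc_rpow_neg_le (by linarith) hm n

theorem half_le_natFloor {T : ℝ} (hT : 1 ≤ T) : T / 2 ≤ ⌊T⌋₊ := by
  have h1 : (1 : ℝ) ≤ ⌊T⌋₊ := by exact_mod_cast Nat.floor_pos.2 hT
  linarith [Nat.lt_floor_add_one T]

theorem bias_sum_le (hβ : 0 < β) (hδ : 1 / 2 < δ) (hδβ : 2 * δ - 4 * β < 1)
    (hlam : 0 < lam) (hlam1 : lam ≤ 1) (n : ℕ) :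
    lam ^ 2 * ∑ i ∈ Icc 1 n, (i : ℝ) ^ (4 * β - 2 * δ) / (1 + lam * (i : ℝ) ^ (2 * β)) ^ 2 ≤
      biasConstant β δ * lam ^ ((2 * δ - 1) / (2 * β)) := by
  set T := lam ^ (-(1 / (2 * β)))
  have hT : 1 ≤ T := Real.one_le_rpow_of_pos_of_le_one_of_nonpos hlam hlam1
    (neg_nonpos.2 (by positivity))
  have hm : 0 < ⌊T⌋₊ := Nat.floor_pos.2 hT
  have hpow_head : (⌊T⌋₊ : ℝ) ^ (4 * β - 2 * δ + 1) ≤ T ^ (4 * β - 2 * δ + 1) :=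
    Real.rpow_le_rpow (by positivity) (Nat.floor_le (by positivity)) (by linarith)
  have hpow_tail : (⌊T⌋₊ : ℝ) ^ (1 - 2 * δ) ≤ 2 ^ (2 * δ - 1) * T ^ (1 - 2 * δ) := by
    calc (⌊T⌋₊ : ℝ) ^ (1 - 2 * δ) ≤ (T / 2) ^ (1 - 2 * δ) :=
          Real.rpow_le_rpow_of_nonpos (by positivity) (half_le_natFloor hT) (by linarith)
      _ = 2 ^ (2 * δ - 1) * T ^ (1 - 2 * δ) := by
          rw [Real.div_rpow (by positivity) zero_le_two, div_eq_mul_inv,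
            ← Real.rpow_neg zero_le_two, neg_sub, mul_comm]
  obtain ⟨hscale_head, hscale_tail⟩ := bias_scale_rpow (δ := δ) hβ.ne' hlam
  have hp : 0 < 4 * β - 2 * δ + 1 := by linarith
  calc _ ≤ lam ^ 2 * ((1 + 1 / (4 * β - 2 * δ + 1)) * (⌊T⌋₊ : ℝ) ^ (4 * β - 2 * δ + 1))
        + (⌊T⌋₊ : ℝ) ^ (1 - 2 * δ) / (2 * δ - 1) := bias_sum_le_of_cutoff hδ hδβ hlam hm n
    _ ≤ lam ^ 2 * ((1 + 1 / (4 * β - 2 * δ + 1)) * T ^ (4 * β - 2 * δ + 1))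
        + 2 ^ (2 * δ - 1) * T ^ (1 - 2 * δ) / (2 * δ - 1) := by
        gcongr
        linarith
    _ = _ := by
        rw [biasConstant, mul_div_right_comm, ← mul_assoc, mul_comm _ (1 + _), mul_assoc,
          hscale_head, hscale_tail]
        ring

end Bias

/-- in the regime `2δ − 4β < 1` (`β, δ > 1/2`), there is a constant `C`
such that for all `n ≥ 1` and `λ ∈ (0,1]`,
`λ² Σ_{i=1}^n i^{4β−2δ}/(1 + λ i^{2β})² ≤ C λ^{(2δ−1)/(2β)}`; hence the bias
term `nλ² Σ …` is `O(n λ^{(2δ−1)/(2β)})`. -/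
theorem stmt13 (β δ : ℝ) (hβ : 1 / 2 < β) (hδ : 1 / 2 < δ)
    (hδβ : 2 * δ - 4 * β < 1) :
    ∃ C : ℝ, ∀ n : ℕ, 1 ≤ n → ∀ lam : ℝ, 0 < lam → lam ≤ 1 →
      (lam ^ 2 * ∑ i ∈ Finset.Icc 1 n,
          (i : ℝ) ^ (4 * β - 2 * δ) / (1 + lam * (i : ℝ) ^ (2 * β)) ^ 2
        ≤ C * lam ^ ((2 * δ - 1) / (2 * β)))
      ∧ (n : ℝ) * lam ^ 2 * ∑ i ∈ Finset.Icc 1 n,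
          (i : ℝ) ^ (4 * β - 2 * δ) / (1 + lam * (i : ℝ) ^ (2 * β)) ^ 2
        ≤ C * ((n : ℝ) * lam ^ ((2 * δ - 1) / (2 * β))) := by
  refine ⟨biasConstant β δ, fun n _ lam hlam hlam1 => ?_⟩
  have h := bias_sum_le (by linarith) hδ hδβ hlam hlam1 n
  refine ⟨h, ?_⟩
  rw [mul_assoc, mul_left_comm (biasConstant β δ)]
  exact mul_le_mul_of_nonneg_left h n.cast_nonneg
end

section
/- Let ρ > 0 and κ satisfy 0 < κ < 2ρ. Then there exists a constant C (depending only on ρ and κ) such that for all n ≥ 1 and all λ > 0, λ² Σ_{i=1}^n e^{(2ρ−κ)i}/(1 + λ e^{ρi})² ≤ C · λ^{κ/ρ}. Consequently, for kernel eigenvalues n μ_i with μ_i = e^{−ρi} and signal components of squared magnitude n ν_i with ν_i = e^{−κi}, the bias term nλ² Σ_{i=1}^n ν_i/(μ_i + λ)² is O(n λ^{κ/ρ}). -/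
/-!
Put `t = -log λ / ρ`, the index at which `λ e^{ρ t} = 1`. Shifting the summation index by `t`
turns the `i`-th term into `λ^{κ/ρ} e^{(2ρ-κ)s} / (1 + e^{ρ s})²` with `s = i - t`, and this is at
most `λ^{κ/ρ} min (e^{(2ρ-κ)s}, e^{-κ s})`. The integers on either side of `t` therefore
contribute two geometric series, with ratios `e^{-(2ρ-κ)}` and `e^{-κ}`, both `< 1` exactly
when `0 < κ < 2ρ`; this is the discrete form of the Beta-integral comparison.
-/

open Real Finset

lemma sum_le_inv_one_sub_of_le_pow {α : Type*} {S : Finset α} {σ : α → ℕ}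
    (hσ : Set.InjOn σ S) {f : α → ℝ} {r : ℝ} (hr₀ : 0 ≤ r) (hr₁ : r < 1)
    (hf : ∀ i ∈ S, f i ≤ r ^ σ i) :
    ∑ i ∈ S, f i ≤ (1 - r)⁻¹ := by
  classical
  calc ∑ i ∈ S, f i ≤ ∑ i ∈ S, r ^ σ i := sum_le_sum hf
    _ = ∑ k ∈ S.image σ, r ^ k := (sum_image hσ).symm
    _ ≤ ∑' k, r ^ k :=
        (summable_geometric_of_lt_one hr₀ hr₁).sum_le_tsum _ fun k _ => pow_nonneg hr₀ k
    _ = (1 - r)⁻¹ := tsum_geometric_of_lt_one hr₀ hr₁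

lemma sum_exp_mul_sub_le_of_forall_le {c t : ℝ} (hc : 0 < c) {S : Finset ℤ}
    (hS : ∀ i ∈ S, (i : ℝ) ≤ t) :
    ∑ i ∈ S, exp (c * (i - t)) ≤ (1 - exp (-c))⁻¹ := by
  have hle_floor : ∀ i ∈ S, i ≤ ⌊t⌋ := fun i hi => Int.le_floor.2 (hS i hi)
  refine sum_le_inv_one_sub_of_le_pow (σ := fun i => (⌊t⌋ - i).toNat)
    (fun i hi j hj hij => ?_) (exp_pos _).le (exp_lt_one_iff.2 (neg_lt_zero.2 hc)) fun i hi => ?_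
  · have hi := hle_floor i hi
    have hj := hle_floor j hj
    simp only at hij
    omega
  · have hσ : (((⌊t⌋ - i).toNat : ℕ) : ℝ) = ⌊t⌋ - i := by
      have := Int.toNat_of_nonneg (sub_nonneg.2 (hle_floor i hi))
      exact_mod_cast congrArg (Int.cast : ℤ → ℝ) this
    rw [← exp_nat_mul, hσ, exp_le_exp]
    nlinarith [Int.floor_le t]

lemma sum_min_exp_le {a b t : ℝ} (ha : 0 < a) (hb : 0 < b) (S : Finset ℤ) :
    ∑ i ∈ S, min (exp (a * (i - t))) (exp (-b * (i - t)))
      ≤ (1 - exp (-a))⁻¹ + (1 - exp (-b))⁻¹ := by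
  rw [← sum_filter_add_sum_filter_not S fun i => (i : ℝ) ≤ t]
  gcongr
  · calc _ ≤ ∑ i ∈ S.filter fun i : ℤ => (i : ℝ) ≤ t, exp (a * (i - t)) :=
          sum_le_sum fun _ _ => min_le_left _ _
      _ ≤ _ := sum_exp_mul_sub_le_of_forall_le ha fun i hi => (mem_filter.1 hi).2
  · -- reflect the indices right of `t` to the left of `-t`
    calc _ ≤ ∑ i ∈ S.filter fun i : ℤ => ¬(i : ℝ) ≤ t, exp (-b * (i - t)) :=
          sum_le_sum fun _ _ => min_le_right _ _
      _ = ∑ j ∈ (S.filter fun i : ℤ => ¬(i : ℝ) ≤ t).map (Equiv.neg ℤ).toEmbedding,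
            exp (b * (j - -t)) := by
          rw [sum_map]
          refine sum_congr rfl fun i _ => ?_
          simp only [Equiv.toEmbedding_apply, Equiv.neg_apply, Int.cast_neg]
          congr 1; ring
      _ ≤ _ := sum_exp_mul_sub_le_of_forall_le hb fun j hj => by
          obtain ⟨i, hi, rfl⟩ := mem_map.1 hj
          simp only [Equiv.toEmbedding_apply, Equiv.neg_apply, Int.cast_neg, neg_le_neg_iff]
          exact (not_le.1 (mem_filter.1 hi).2).le

lemma exp_div_one_add_exp_sq_le_min (ρ κ s : ℝ) :
    exp ((2 * ρ - κ) * s) / (1 + exp (ρ * s)) ^ 2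
      ≤ min (exp ((2 * ρ - κ) * s)) (exp (-κ * s)) := by
  have hu := exp_pos (ρ * s)
  have hden : 1 ≤ (1 + exp (ρ * s)) ^ 2 := by nlinarith
  refine le_min (div_le_self (exp_pos _).le hden) ?_
  have hsplit : exp ((2 * ρ - κ) * s) = exp (ρ * s) ^ 2 * exp (-κ * s) := by
    rw [sq, ← exp_add, ← exp_add]; ring_nf
  rw [hsplit, div_le_iff₀ (by positivity)]
  nlinarith [exp_pos (-κ * s)]

lemma sq_mul_exp_div_one_add_mul_exp_sq {ρ lam : ℝ} (hρ : ρ ≠ 0) (hlam : 0 < lam)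
    (κ x : ℝ) :
    lam ^ 2 * (exp ((2 * ρ - κ) * x) / (1 + lam * exp (ρ * x)) ^ 2)
      = lam ^ (κ / ρ) * (exp ((2 * ρ - κ) * (x - -log lam / ρ))
          / (1 + exp (ρ * (x - -log lam / ρ))) ^ 2) := by
  have hlam' : lam = exp (log lam) := (exp_log hlam).symm
  have hden : lam * exp (ρ * x) = exp (ρ * (x - -log lam / ρ)) := by
    conv_lhs => rw [hlam']
    rw [← exp_add]; congr 1; field_simp; ring
  have hnum : lam ^ 2 * exp ((2 * ρ - κ) * x)
      = lam ^ (κ / ρ) * exp ((2 * ρ - κ) * (x - -log lam / ρ)) := by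
    rw [rpow_def_of_pos hlam, ← exp_add]
    conv_lhs => rw [hlam', ← exp_nat_mul, ← exp_add]
    congr 1; field_simp; push_cast; ring
  rw [← mul_div_assoc, hnum, hden, mul_div_assoc]

lemma exp_neg_mul_div_exp_neg_mul_add_sq (ρ κ lam x : ℝ) :
    exp (-κ * x) / (exp (-ρ * x) + lam) ^ 2
      = exp ((2 * ρ - κ) * x) / (1 + lam * exp (ρ * x)) ^ 2 := by
  have hnum : exp (-κ * x) * exp (ρ * x) ^ 2 = exp ((2 * ρ - κ) * x) := by
    rw [sq, ← exp_add, ← exp_add]; ring_nf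
  have hden : (exp (-ρ * x) + lam) ^ 2 * exp (ρ * x) ^ 2 = (1 + lam * exp (ρ * x)) ^ 2 := by
    rw [← mul_pow, add_mul, ← exp_add, neg_mul, neg_add_cancel, exp_zero]
  rw [← hnum, ← hden, mul_div_mul_right _ _ (pow_ne_zero 2 (exp_pos _).ne')]

lemma sq_mul_sum_le_mul_rpow {ρ κ lam : ℝ} (hρ : 0 < ρ) (hκ : 0 < κ) (hκρ : κ < 2 * ρ)
    (hlam : 0 < lam) (S : Finset ℕ) :
    lam ^ 2 * ∑ i ∈ S, exp ((2 * ρ - κ) * (i : ℝ)) / (1 + lam * exp (ρ * (i : ℝ))) ^ 2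
      ≤ ((1 - exp (-(2 * ρ - κ)))⁻¹ + (1 - exp (-κ))⁻¹) * lam ^ (κ / ρ) := by
  set t := -log lam / ρ
  have hmin := sum_min_exp_le (t := t) (sub_pos.2 hκρ) hκ (S.map Nat.castEmbedding)
  rw [sum_map] at hmin
  simp only [Nat.castEmbedding_apply, Int.cast_natCast] at hmin
  calc _ = ∑ i ∈ S,
          lam ^ 2 * (exp ((2 * ρ - κ) * (i : ℝ)) / (1 + lam * exp (ρ * (i : ℝ))) ^ 2) :=
        mul_sum _ _ _
    _ ≤ ∑ i ∈ S,
          lam ^ (κ / ρ) * min (exp ((2 * ρ - κ) * (i - t))) (exp (-κ * (i - t))) := by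
        refine sum_le_sum fun i _ => ?_
        rw [sq_mul_exp_div_one_add_mul_exp_sq hρ.ne' hlam]
        gcongr
        exact exp_div_one_add_exp_sq_le_min ρ κ _
    _ ≤ lam ^ (κ / ρ) * ((1 - exp (-(2 * ρ - κ)))⁻¹ + (1 - exp (-κ))⁻¹) := by
        rw [← mul_sum]
        gcongr
    _ = _ := mul_comm _ _

/-- in the regime `0 < κ < 2ρ`, there is a constant `C` such that for all
`n ≥ 1` and `λ > 0`, `λ² Σ_{i=1}^n e^{(2ρ−κ)i}/(1 + λ e^{ρi})² ≤ C λ^{κ/ρ}`; hence for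
eigenvalues `n e^{−ρi}` and signal `n e^{−κi}` the bias term
`nλ² Σ_{i=1}^n e^{−κi}/(e^{−ρi} + λ)²` is `O(n λ^{κ/ρ})`. -/
theorem stmt14 (ρ κ : ℝ) (hρ : 0 < ρ) (hκ : 0 < κ) (hκρ : κ < 2 * ρ) :
    ∃ C : ℝ, ∀ n : ℕ, 1 ≤ n → ∀ lam : ℝ, 0 < lam →
      (lam ^ 2 * ∑ i ∈ Finset.Icc 1 n,
          Real.exp ((2 * ρ - κ) * (i : ℝ)) / (1 + lam * Real.exp (ρ * (i : ℝ))) ^ 2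
        ≤ C * lam ^ (κ / ρ))
      ∧ (n : ℝ) * lam ^ 2 * ∑ i ∈ Finset.Icc 1 n,
          Real.exp (-κ * (i : ℝ)) / (Real.exp (-ρ * (i : ℝ)) + lam) ^ 2
        ≤ C * ((n : ℝ) * lam ^ (κ / ρ)) := by
  refine ⟨(1 - exp (-(2 * ρ - κ)))⁻¹ + (1 - exp (-κ))⁻¹, fun n _ lam hlam => ?_⟩
  have hbound := sq_mul_sum_le_mul_rpow hρ hκ hκρ hlam (Icc 1 n)
  refine ⟨hbound, ?_⟩
  simp only [exp_neg_mul_div_exp_neg_mul_add_sq]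
  have hscaled := mul_le_mul_of_nonneg_left hbound n.cast_nonneg
  linarith
end

section
/- Let ρ > 0 and δ > 1/2. Then there exists a constant C (depending only on ρ and δ) such that for all λ with 0 < λ ≤ e^{−ρ} and all n ≥ 1, λ² Σ_{i=1}^n i^{−2δ}/(e^{−ρi} + λ)² ≤ C · (log(1/λ))^{1−2δ}. Consequently, for kernel eigenvalues n μ_i with μ_i = e^{−ρi} and signal components of squared magnitude n ν_i with ν_i = i^{−2δ}, the bias term nλ² Σ_{i=1}^n ν_i/(μ_i + λ)² is O( n (log(1/λ))^{1−2δ} ). -/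
/-!
Put `L = log (1/λ)` and `m = ⌊L/ρ⌋₊ ≥ 1`, so that `λ ≤ e^{-ρm}`. For `i ≤ m` the factor
`λ/(e^{-ρi} + λ)` is at most `e^{-ρ(m-i)}`, while `(m/i)^{2δ} ≤ (1 + (m-i))^{2δ}` grows only
polynomially in `m - i`; hence each of these at most `m` terms is `O(m^{-2δ})`. For `i > m` the
factor is at most `1` and the tail `∑_{i>m} i^{-2δ}` is at most `m^{1-2δ}/(2δ-1)` by comparison
with an integral. Both parts are `O(m^{1-2δ}) = O(L^{1-2δ})` because `m ≥ L/(2ρ)`.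
-/

open Finset Real

theorem sum_Ioc_rpow_neg_le_s15 {s : ℝ} (hs : 1 < s) {m : ℕ} (hm : 1 ≤ m) (n : ℕ) :
    ∑ i ∈ Ioc m n, (i : ℝ) ^ (-s) ≤ (m : ℝ) ^ (1 - s) / (s - 1) := by
  have hm0 : (0 : ℝ) < m := by exact_mod_cast hm
  have hbound : 0 ≤ (m : ℝ) ^ (1 - s) / (s - 1) :=
    div_nonneg (rpow_nonneg hm0.le _) (by linarith)
  rcases le_total n m with hnm | hmn
  · rwa [Ioc_eq_empty (by omega), sum_empty]
  have hanti : AntitoneOn (fun x : ℝ ↦ x ^ (-s)) (Set.Icc (m : ℝ) n) :=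
    (antitoneOn_rpow_Ioi_of_exponent_nonpos (by linarith)).mono
      fun x hx ↦ hm0.trans_le hx.1
  have hzero : (0 : ℝ) ∉ Set.uIcc (m : ℝ) n := by
    rw [Set.uIcc_of_le (by exact_mod_cast hmn)]
    exact fun h ↦ hm0.not_ge h.1
  calc ∑ i ∈ Ioc m n, (i : ℝ) ^ (-s)
      = ∑ i ∈ Ico m n, (((i + 1 : ℕ) : ℝ)) ^ (-s) := by
        rw [← Ico_add_one_add_one_eq_Ioc, sum_Ico_add' (fun i : ℕ ↦ (i : ℝ) ^ (-s))]
    _ ≤ ∫ x in (m : ℝ)..n, x ^ (-s) := hanti.sum_le_integral_Ico hmn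
    _ = ((m : ℝ) ^ (1 - s) - (n : ℝ) ^ (1 - s)) / (s - 1) := by
        rw [integral_rpow (.inr ⟨by linarith, hzero⟩), show -s + 1 = 1 - s by ring, ← neg_sub s 1,
          div_neg, ← neg_div, neg_sub]
    _ ≤ (m : ℝ) ^ (1 - s) / (s - 1) := by
        gcongr
        exact sub_le_self _ (rpow_nonneg (Nat.cast_nonneg n) _)


theorem exists_one_add_rpow_le_mul_exp (s : ℝ) {ρ : ℝ} (hρ : 0 < ρ) :
    ∃ K, ∀ x, 0 ≤ x → (1 + x) ^ s ≤ K * exp (ρ * x) := by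
  set k := ⌈s⌉₊
  refine ⟨k.factorial * exp ρ / ρ ^ k, fun x hx ↦ ?_⟩
  calc (1 + x) ^ s ≤ (1 + x) ^ (k : ℝ) :=
        rpow_le_rpow_of_exponent_le (by linarith) (Nat.le_ceil s)
    _ = (ρ * (1 + x)) ^ k / k.factorial * (k.factorial / ρ ^ k) := by
        rw [rpow_natCast, mul_pow]; field_simp
    _ ≤ exp (ρ * (1 + x)) * (k.factorial / ρ ^ k) := by
        gcongr; exact Real.pow_div_factorial_le_exp _ (by positivity) k
    _ = k.factorial * exp ρ / ρ ^ k * exp (ρ * x) := by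
        rw [mul_one_add, exp_add]; ring

theorem rpow_neg_mul_exp_le {s ρ K : ℝ} (hs : 0 ≤ s)
    (hK : ∀ x, 0 ≤ x → (1 + x) ^ s ≤ K * exp (ρ * x)) {x y : ℝ} (hx : 1 ≤ x) (hxy : x ≤ y) :
    x ^ (-s) * exp (-(ρ * (y - x))) ≤ K * y ^ (-s) := by
  have hx0 : 0 < x := by linarith
  have hy0 : 0 < y := by linarith
  have hy : y ≤ x * (1 + (y - x)) := by nlinarith
  have hys : y ^ s ≤ x ^ s * (K * exp (ρ * (y - x))) := by
    calc y ^ s ≤ (x * (1 + (y - x))) ^ s := by gcongr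
      _ = x ^ s * (1 + (y - x)) ^ s := mul_rpow hx0.le (by linarith)
      _ ≤ x ^ s * (K * exp (ρ * (y - x))) := by gcongr; exact hK _ (by linarith)
  rw [rpow_neg hx0.le, rpow_neg hy0.le, exp_neg]
  have hxs : 0 < x ^ s := rpow_pos_of_pos hx0 s
  have hys0 : 0 < y ^ s := rpow_pos_of_pos hy0 s
  field_simp
  linarith

theorem sq_mul_div_add_sq_le_self {a b c : ℝ} (ha : 0 < a) (hb : 0 ≤ b) (hc : 0 ≤ c) :
    b ^ 2 * (c / (a + b) ^ 2) ≤ c := by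
  rw [mul_div_left_comm]
  refine mul_le_of_le_one_right hc (div_le_one_of_le₀ ?_ (by positivity))
  gcongr
  linarith

theorem sq_mul_div_add_sq_le_mul_div {a b c : ℝ} (ha : 0 < a) (hb : 0 ≤ b) (hc : 0 ≤ c) :
    b ^ 2 * (c / (a + b) ^ 2) ≤ c * (b / a) := by
  rw [mul_div_left_comm]
  refine mul_le_mul_of_nonneg_left ?_ hc
  rw [div_le_div_iff₀ (by positivity) ha]
  nlinarith [mul_nonneg hb ha.le, mul_nonneg (mul_nonneg hb hb) hb]

theorem exists_sq_mul_sum_rpow_neg_div_sq_le (ρ s : ℝ) (hρ : 0 < ρ) (hs : 1 < s) :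
    ∃ C, 0 ≤ C ∧ ∀ m : ℕ, 1 ≤ m → ∀ lam : ℝ, 0 < lam → lam ≤ exp (-(ρ * m)) → ∀ n : ℕ,
      lam ^ 2 * ∑ i ∈ Icc 1 n, (i : ℝ) ^ (-s) / (exp (-ρ * i) + lam) ^ 2
        ≤ C * (m : ℝ) ^ (1 - s) := by
  obtain ⟨K, hK⟩ := exists_one_add_rpow_le_mul_exp s hρ
  have hK0 : 0 ≤ K := zero_le_one.trans (by simpa using hK 0 le_rfl)
  have hs1 : 0 < s - 1 := by linarith
  refine ⟨K + 1 / (s - 1), by positivity, fun m hm lam hlam hlam_m n ↦ ?_⟩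
  have hm0 : (0 : ℝ) < m := by exact_mod_cast hm
  set term := fun i : ℕ ↦ lam ^ 2 * ((i : ℝ) ^ (-s) / (exp (-ρ * i) + lam) ^ 2)
  have hlow : ∀ i ∈ (Icc 1 n).filter (· ≤ m), term i ≤ K * (m : ℝ) ^ (-s) := by
    intro i hi
    obtain ⟨hi, him⟩ := mem_filter.mp hi
    have hi1 : (1 : ℝ) ≤ i := by exact_mod_cast (mem_Icc.mp hi).1
    have hratio : lam / exp (-ρ * i) ≤ exp (-(ρ * (m - i))) := by
      calc lam / exp (-ρ * i) ≤ exp (-(ρ * m)) / exp (-ρ * i) := by gcongr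
        _ = exp (-(ρ * (m - i))) := by rw [← exp_sub]; ring_nf
    calc term i ≤ (i : ℝ) ^ (-s) * (lam / exp (-ρ * i)) :=
          sq_mul_div_add_sq_le_mul_div (exp_pos _) hlam.le (rpow_nonneg (by linarith) _)
      _ ≤ (i : ℝ) ^ (-s) * exp (-(ρ * (m - i))) := by gcongr
      _ ≤ K * (m : ℝ) ^ (-s) :=
          rpow_neg_mul_exp_le (by linarith) hK hi1 (by exact_mod_cast him)
  have hhigh : ∀ i ∈ (Icc 1 n).filter (¬ · ≤ m), term i ≤ (i : ℝ) ^ (-s) := fun i _ ↦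
    sq_mul_div_add_sq_le_self (exp_pos _) hlam.le (rpow_nonneg (Nat.cast_nonneg i) _)
  have hcard : #((Icc 1 n).filter (· ≤ m)) ≤ m := by
    calc #((Icc 1 n).filter (· ≤ m)) ≤ #(Icc 1 m) := by
          refine card_le_card fun i hi ↦ ?_
          simp only [mem_filter, mem_Icc] at hi ⊢
          omega
      _ = m := by simp
  have htail : (Icc 1 n).filter (¬ · ≤ m) ⊆ Ioc m n := fun i hi ↦ by
    simp only [mem_filter, mem_Icc, mem_Ioc] at hi ⊢
    omega
  rw [mul_sum, ← sum_filter_add_sum_filter_not (Icc 1 n) (· ≤ m)]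
  calc ∑ i ∈ (Icc 1 n).filter (· ≤ m), term i + ∑ i ∈ (Icc 1 n).filter (¬ · ≤ m), term i
      ≤ m * (K * (m : ℝ) ^ (-s)) + ∑ i ∈ Ioc m n, (i : ℝ) ^ (-s) := by
        gcongr
        · calc _ ≤ #((Icc 1 n).filter (· ≤ m)) • (K * (m : ℝ) ^ (-s)) :=
                sum_le_card_nsmul _ _ _ hlow
            _ ≤ _ := by rw [nsmul_eq_mul]; gcongr
        · exact (sum_le_sum hhigh).trans
            (sum_le_sum_of_subset_of_nonneg htail fun i _ _ ↦ rpow_nonneg (Nat.cast_nonneg i) _)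
    _ = K * (m : ℝ) ^ (1 - s) + ∑ i ∈ Ioc m n, (i : ℝ) ^ (-s) := by
        rw [sub_eq_add_neg, rpow_add hm0, rpow_one]; ring
    _ ≤ K * (m : ℝ) ^ (1 - s) + (m : ℝ) ^ (1 - s) / (s - 1) := by
        grw [sum_Ioc_rpow_neg_le_s15 hs hm n]
    _ = (K + 1 / (s - 1)) * (m : ℝ) ^ (1 - s) := by ring

theorem natFloor_div_rpow_le {ρ L s : ℝ} (hρ : 0 < ρ) (hL : ρ ≤ L) (hs : 1 ≤ s) :
    (⌊L / ρ⌋₊ : ℝ) ^ (1 - s) ≤ (2 * ρ) ^ (s - 1) * L ^ (1 - s) := by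
  have hL0 : 0 < L := hρ.trans_le hL
  have hone : 1 ≤ L / ρ := by rwa [le_div_iff₀ hρ, one_mul]
  have hfloor : L / (2 * ρ) ≤ ⌊L / ρ⌋₊ := by
    have h1 : (1 : ℝ) ≤ ⌊L / ρ⌋₊ := by exact_mod_cast Nat.le_floor (by exact_mod_cast hone)
    have h2 : L / ρ ≤ 2 * ⌊L / ρ⌋₊ := by linarith [Nat.lt_floor_add_one (L / ρ)]
    rw [div_le_iff₀ hρ] at h2
    rw [div_le_iff₀ (by positivity)]
    linarith
  calc (⌊L / ρ⌋₊ : ℝ) ^ (1 - s) ≤ (L / (2 * ρ)) ^ (1 - s) :=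
        rpow_le_rpow_of_nonpos (by positivity) hfloor (by linarith)
    _ = (2 * ρ) ^ (s - 1) * L ^ (1 - s) := by
        rw [div_rpow hL0.le (by positivity), div_eq_mul_inv, ← rpow_neg (by positivity), neg_sub,
          mul_comm]

/-- mixed decay: `μ_i = e^{−ρi}` (`ρ > 0`) and `ν_i = i^{−2δ}` (`δ > 1/2`).
There is a constant `C` such that for all `0 < λ ≤ e^{−ρ}` and all `n ≥ 1`,
`λ² Σ_{i=1}^n i^{−2δ}/(e^{−ρi} + λ)² ≤ C (log(1/λ))^{1−2δ}`; hence the bias term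
`nλ² Σ …` is `O(n (log(1/λ))^{1−2δ})`. -/
theorem stmt15 (ρ δ : ℝ) (hρ : 0 < ρ) (hδ : 1 / 2 < δ) :
    ∃ C : ℝ, ∀ lam : ℝ, 0 < lam → lam ≤ Real.exp (-ρ) → ∀ n : ℕ, 1 ≤ n →
      (lam ^ 2 * ∑ i ∈ Finset.Icc 1 n,
          (i : ℝ) ^ (-(2 * δ)) / (Real.exp (-ρ * (i : ℝ)) + lam) ^ 2
        ≤ C * Real.log (1 / lam) ^ (1 - 2 * δ))
      ∧ (n : ℝ) * lam ^ 2 * ∑ i ∈ Finset.Icc 1 n,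
          (i : ℝ) ^ (-(2 * δ)) / (Real.exp (-ρ * (i : ℝ)) + lam) ^ 2
        ≤ C * ((n : ℝ) * Real.log (1 / lam) ^ (1 - 2 * δ)) := by
  obtain ⟨C, hC0, hC⟩ := exists_sq_mul_sum_rpow_neg_div_sq_le ρ (2 * δ) hρ (by linarith)
  refine ⟨C * (2 * ρ) ^ (2 * δ - 1), fun lam hlam hlamρ n _ ↦ ?_⟩
  have hlamL : lam = exp (-log (1 / lam)) := by rw [one_div, log_inv, neg_neg, exp_log hlam]
  set L := log (1 / lam)
  have hL : ρ ≤ L := by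
    rw [hlamL, exp_le_exp] at hlamρ
    linarith
  set m := ⌊L / ρ⌋₊
  have hm : 1 ≤ m := Nat.le_floor (by rw [Nat.cast_one, le_div_iff₀ hρ]; linarith)
  have hlam_m : lam ≤ exp (-(ρ * m)) := by
    have hmL : ρ * m ≤ L := by
      rw [mul_comm, ← le_div_iff₀ hρ]
      exact Nat.floor_le (div_nonneg (hρ.le.trans hL) hρ.le)
    rw [hlamL, exp_le_exp]
    linarith
  have hbias : lam ^ 2 * ∑ i ∈ Icc 1 n, (i : ℝ) ^ (-(2 * δ)) / (exp (-ρ * i) + lam) ^ 2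
      ≤ C * (2 * ρ) ^ (2 * δ - 1) * L ^ (1 - 2 * δ) :=
    calc _ ≤ C * (m : ℝ) ^ (1 - 2 * δ) := hC m hm lam hlam hlam_m n
      _ ≤ C * ((2 * ρ) ^ (2 * δ - 1) * L ^ (1 - 2 * δ)) := by
          grw [natFloor_div_rpow_le hρ hL (by linarith)]
      _ = _ := by ring
  refine ⟨hbias, ?_⟩
  rw [mul_assoc, mul_left_comm _ (n : ℝ)]
  gcongr
end
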